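/- arXiv:1409.8132 — 5 statements merged into one kernel-verified Lean document; each statement's English description precedes it below -/
import Mathlib

section
/- The Diophantine equation x^2 = 57·2^n + 117440512 has solutions in nonnegative integers (x,n) exactly for n ∈ {0, 14, 16, 20, 24, 25}, with corresponding x-values 10837, 10880, 11008, 13312, 32768, 45056; in particular, these six pairs are all solutions. -/
/-!
Write `117440512 = 7 * 2 ^ 24`. For `n ≥ 27` the right-hand side is `2 ^ 24 * (57 * 2 ^ (n - 24) + 7)`,
so a solution would give `x = 2 ^ 12 * y` with `y ^ 2 ≡ 7 (mod 8)`, which no square satisfies.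
The remaining exponents `n ≤ 26` are settled by computing integer square roots.
-/

theorem Nat.sq_eq_iff_eq_sqrt (x c : ℕ) : x ^ 2 = c ↔ x = Nat.sqrt c ∧ Nat.sqrt c ^ 2 = c := by
  constructor
  · rintro rfl
    exact ⟨(Nat.sqrt_eq' x).symm, by rw [Nat.sqrt_eq']⟩
  · rintro ⟨rfl, h⟩
    exact h

theorem Nat.sq_mod_eight_ne_seven (y : ℕ) : y ^ 2 % 8 ≠ 7 := by
  rw [Nat.pow_mod]
  have : y % 8 < 8 := Nat.mod_lt y (by norm_num)
  interval_cases y % 8 <;> norm_num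

theorem Nat.exists_eq_mul_of_sq_eq_sq_mul {x a m : ℕ} (ha : a ≠ 0) (h : x ^ 2 = a ^ 2 * m) :
    ∃ y, x = a * y ∧ y ^ 2 = m := by
  obtain ⟨y, rfl⟩ : a ∣ x := (Nat.pow_dvd_pow_iff two_ne_zero).mp ⟨m, h⟩
  refine ⟨y, rfl, ?_⟩
  rw [mul_pow] at h
  exact Nat.eq_of_mul_eq_mul_left (by positivity) h

theorem le_twenty_six_of_sq_eq {x n : ℕ} (h : x ^ 2 = 57 * 2 ^ n + 117440512) : n ≤ 26 := by
  by_contra! hn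
  obtain ⟨k, rfl⟩ := Nat.exists_eq_add_of_le hn
  have hfactor : 57 * 2 ^ (27 + k) + 117440512 = (2 ^ 12) ^ 2 * (8 * (57 * 2 ^ k) + 7) := by
    rw [pow_add]; ring
  obtain ⟨y, -, hy⟩ := Nat.exists_eq_mul_of_sq_eq_sq_mul (by positivity) (h.trans hfactor)
  exact Nat.sq_mod_eight_ne_seven y (by omega)

theorem stmt_3 (x n : ℕ) :
    x^2 = 57 * 2^n + 117440512 ↔
      (x, n) = (10837, 0) ∨ (x, n) = (10880, 14) ∨ (x, n) = (11008, 16) ∨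
      (x, n) = (13312, 20) ∨ (x, n) = (32768, 24) ∨ (x, n) = (45056, 25) := by
  by_cases hn : n ≤ 26
  · rw [Nat.sq_eq_iff_eq_sqrt]
    interval_cases n <;> norm_num
  · refine iff_of_false (fun h ↦ hn (le_twenty_six_of_sq_eq h)) ?_
    simp only [Prod.mk.injEq]
    omega
end

section
/- The Diophantine equation x^2 = 28·3^n + 2997 has solutions in nonnegative integers exactly for n ∈ {0, 2, 5, 6, 10}; in particular the pairs with n = 0, 2, 5, 6, 10 (and x = 55, 57, 83, 141, 1287 respectively) are solutions. -/
/-!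
For `n ≥ 4` we get `81 ∣ x²`, so `x = 9y` with `y² = 28·3^(n-4) + 37`; by the parity of `n` this reads
`y² - 28 z² = 37` or `y² - 84 z² = 37` with `z = 3^t`. Dividing a solution `y + z√d` by the unit
`127 + 24√28`, resp. `55 + 6√84`, gives a smaller solution as long as `z` is large, so every solution
lies in the forward unit-orbit of one of the finitely many small ones. Modulo `34911 = 3⁴·431`,
resp. `81`, these orbits are periodic and a finite check shows that no `z` in them is congruent to
`3^t` with `t ≥ 4`. The remaining exponents `n < 12` are checked directly.
-/

/-- The coordinates of `(a + b√d)(y + z√d)` for `p = (y, z)`. -/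
def pellMul {R : Type*} [CommSemiring R] (d a b : R) (p : R × R) : R × R :=
  (a * p.1 + d * b * p.2, b * p.1 + a * p.2)

theorem semiconj_natCast_pellMul (R : Type*) [CommSemiring R] (d a b : ℕ) :
    Function.Semiconj (Prod.map (Nat.cast : ℕ → R) Nat.cast) (pellMul d a b) (pellMul (d : R) a b) :=
  fun p => by simp [pellMul]

theorem Function.IsPeriodicPt.forall_iterate {α : Type*} {f : α → α} {x : α} {n : ℕ}
    (hx : Function.IsPeriodicPt f n x) (hn : 0 < n) {P : α → Prop} (h : ∀ i < n, P (f^[i] x))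
    (i : ℕ) : P (f^[i] x) := by
  rw [← hx.iterate_mod_apply]
  exact h _ (Nat.mod_lt _ hn)

theorem pow_eq_pow_add_mod {M : Type*} [Monoid M] {x : M} {m n : ℕ} (h : x ^ (m + n) = x ^ m)
    {t : ℕ} (ht : m ≤ t) : x ^ t = x ^ (m + (t - m) % n) := by
  have hper : Function.IsPeriodicPt (x * ·) n (x ^ m) := by
    rw [Function.IsPeriodicPt, Function.IsFixedPt, mul_left_iterate]
    show x ^ n * x ^ m = x ^ m
    rw [← pow_add, add_comm, h]
  have := hper.iterate_mod_apply (t - m)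
  simp only [mul_left_iterate, ← pow_add] at this
  rw [Nat.sub_add_cancel ht] at this
  rw [← this, add_comm]

section Descent

variable {d a b k : ℕ}

theorem exists_pellMul_eq_of_le (hunit : a ^ 2 = d * b ^ 2 + 1) (hb : 0 < b) (hk : 0 < k)
    {y z : ℕ} (h : y ^ 2 = d * z ^ 2 + k) (hz : b ^ 2 * k ≤ z ^ 2) :
    ∃ y' z', y' ^ 2 = d * z' ^ 2 + k ∧ z' < z ∧ pellMul d a b (y', z') = (y, z) := by
  have hby : b * y ≤ a * z := by
    rw [← Nat.pow_le_pow_iff_left two_ne_zero, mul_pow, mul_pow, h, hunit]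
    nlinarith
  have hdbz : d * b * z ≤ a * y := by
    rw [← Nat.pow_le_pow_iff_left two_ne_zero, mul_pow, mul_pow, mul_pow, h, hunit]
    nlinarith
  have hlt : a * z < b * y + z := by
    have hby2 : (b * y) ^ 2 = b ^ 2 * (d * z ^ 2 + k) := by rw [mul_pow, h]
    rw [← Nat.pow_lt_pow_iff_left two_ne_zero, mul_pow, hunit]
    nlinarith [Nat.mul_pos (pow_pos hb 2) hk, Nat.zero_le (b * y * z)]
  obtain ⟨z', hz'⟩ := Nat.exists_eq_add_of_le hby
  obtain ⟨y', hy'⟩ := Nat.exists_eq_add_of_le hdbz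
  zify at hz' hy' h hunit
  have hY : (y' : ℤ) = a * y - d * b * z := by linarith
  have hZ : (z' : ℤ) = a * z - b * y := by linarith
  refine ⟨y', z', ?_, by omega, ?_⟩
  · zify
    rw [hY, hZ]
    linear_combination (y ^ 2 - d * z ^ 2 : ℤ) * hunit + h
  · simp only [pellMul, Prod.mk.injEq]
    zify
    rw [hY, hZ]
    constructor
    · linear_combination (y : ℤ) * hunit
    · linear_combination (z : ℤ) * hunit

theorem exists_iterate_pellMul_eq (hunit : a ^ 2 = d * b ^ 2 + 1) (hb : 0 < b) (hk : 0 < k)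
    {y z : ℕ} (h : y ^ 2 = d * z ^ 2 + k) :
    ∃ y₀ z₀ i, y₀ ^ 2 = d * z₀ ^ 2 + k ∧ z₀ ^ 2 < b ^ 2 * k ∧
      (pellMul d a b)^[i] (y₀, z₀) = (y, z) := by
  induction z using Nat.strong_induction_on generalizing y with
  | _ z ih =>
    by_cases hz : z ^ 2 < b ^ 2 * k
    · exact ⟨y, z, 0, h, hz, rfl⟩
    obtain ⟨y', z', h', hz', hyz⟩ := exists_pellMul_eq_of_le hunit hb hk h (not_lt.1 hz)
    obtain ⟨y₀, z₀, i, h₀, hz₀, hi⟩ := ih z' hz' h'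
    exact ⟨y₀, z₀, i + 1, h₀, hz₀, by rw [Function.iterate_succ_apply', hi, hyz]⟩

theorem exists_natCast_eq_iterate_pellMul (R : Type*) [CommSemiring R]
    (hunit : a ^ 2 = d * b ^ 2 + 1) (hb : 0 < b) (hk : 0 < k) {y z : ℕ}
    (h : y ^ 2 = d * z ^ 2 + k) :
    ∃ y₀ z₀ i, y₀ ^ 2 = d * z₀ ^ 2 + k ∧ z₀ ^ 2 < b ^ 2 * k ∧
      (z : R) = ((pellMul (d : R) a b)^[i] (y₀, z₀)).2 := by
  obtain ⟨y₀, z₀, i, h₀, hz₀, hi⟩ := exists_iterate_pellMul_eq hunit hb hk h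
  refine ⟨y₀, z₀, i, h₀, hz₀, ?_⟩
  have := congrArg Prod.snd ((semiconj_natCast_pellMul R d a b).iterate_right i (y₀, z₀))
  rwa [hi] at this

end Descent

theorem eq_of_sq_eq_28_mul_sq_add_37 {y z : ℕ} (h : y ^ 2 = 28 * z ^ 2 + 37)
    (hz : z ^ 2 < 24 ^ 2 * 37) : y = 17 ∧ z = 3 ∨ y = 143 ∧ z = 27 := by
  have hz' : z < 146 := by nlinarith
  have key : ∀ z < 146, IsSquare (28 * z ^ 2 + 37) → z = 3 ∨ z = 27 := by decide +kernel
  rcases key z hz' ⟨y, by rw [← h, sq]⟩ with rfl | rfl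
  · exact .inl ⟨Nat.pow_left_injective two_ne_zero (h.trans (by norm_num)), rfl⟩
  · exact .inr ⟨Nat.pow_left_injective two_ne_zero (h.trans (by norm_num)), rfl⟩

theorem eq_of_sq_eq_84_mul_sq_add_37 {y z : ℕ} (h : y ^ 2 = 84 * z ^ 2 + 37)
    (hz : z ^ 2 < 6 ^ 2 * 37) : y = 11 ∧ z = 1 ∨ y = 101 ∧ z = 11 := by
  have hz' : z < 37 := by nlinarith
  have key : ∀ z < 37, IsSquare (84 * z ^ 2 + 37) → z = 1 ∨ z = 11 := by decide +kernel
  rcases key z hz' ⟨y, by rw [← h, sq]⟩ with rfl | rfl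
  · exact .inl ⟨Nat.pow_left_injective two_ne_zero (h.trans (by norm_num)), rfl⟩
  · exact .inr ⟨Nat.pow_left_injective two_ne_zero (h.trans (by norm_num)), rfl⟩

theorem iterate_pellMul_28_snd_ne_three_pow {p : ZMod 34911 × ZMod 34911}
    (hp : p = (17, 3) ∨ p = (143, 27)) (i : ℕ) {s : ℕ} (hs : s < 43) :
    ((pellMul 28 127 24)^[i] p).2 ≠ 3 ^ (4 + s) := by
  have hper : Function.IsPeriodicPt (pellMul (28 : ZMod 34911) 127 24) 54 p := by
    rcases hp with rfl | rfl <;> decide +kernel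
  refine hper.forall_iterate (P := fun q => ∀ s < 43, q.2 ≠ 3 ^ (4 + s)) (by norm_num) ?_ i s hs
  rcases hp with rfl | rfl <;> decide +kernel

theorem iterate_pellMul_84_snd_ne_zero {p : ZMod 81 × ZMod 81}
    (hp : p = (11, 1) ∨ p = (101, 11)) (i : ℕ) : ((pellMul 84 55 6)^[i] p).2 ≠ 0 := by
  have hper : Function.IsPeriodicPt (pellMul (84 : ZMod 81) 55 6) 27 p := by
    rcases hp with rfl | rfl <;> decide +kernel
  refine hper.forall_iterate (P := fun q => q.2 ≠ 0) (by norm_num) ?_ i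
  rcases hp with rfl | rfl <;> decide +kernel

theorem sq_ne_28_mul_three_pow_sq_add_37 {t : ℕ} (ht : 4 ≤ t) (y : ℕ) :
    y ^ 2 ≠ 28 * (3 ^ t) ^ 2 + 37 := by
  intro h
  obtain ⟨y₀, z₀, i, h₀, hz₀, hi⟩ :=
    exists_natCast_eq_iterate_pellMul (ZMod 34911) (a := 127) (b := 24) (by norm_num) (by norm_num)
      (by norm_num) h
  have hper : (3 : ZMod 34911) ^ (4 + 43) = 3 ^ 4 := by decide
  rw [Nat.cast_pow, Nat.cast_ofNat, pow_eq_pow_add_mod hper ht] at hi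
  refine iterate_pellMul_28_snd_ne_three_pow ?_ i (Nat.mod_lt _ (by norm_num)) hi.symm
  rcases eq_of_sq_eq_28_mul_sq_add_37 h₀ hz₀ with ⟨rfl, rfl⟩ | ⟨rfl, rfl⟩
  · exact .inl (by norm_num)
  · exact .inr (by norm_num)

theorem sq_ne_84_mul_three_pow_sq_add_37 {t : ℕ} (ht : 4 ≤ t) (y : ℕ) :
    y ^ 2 ≠ 84 * (3 ^ t) ^ 2 + 37 := by
  intro h
  obtain ⟨y₀, z₀, i, h₀, hz₀, hi⟩ :=
    exists_natCast_eq_iterate_pellMul (ZMod 81) (a := 55) (b := 6) (by norm_num) (by norm_num)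
      (by norm_num) h
  rw [Nat.cast_pow, Nat.cast_ofNat, pow_eq_zero_of_le ht (by decide)] at hi
  refine iterate_pellMul_84_snd_ne_zero ?_ i hi.symm
  rcases eq_of_sq_eq_84_mul_sq_add_37 h₀ hz₀ with ⟨rfl, rfl⟩ | ⟨rfl, rfl⟩
  · exact .inl (by norm_num)
  · exact .inr (by norm_num)

theorem exists_sq_eq_28_mul_three_pow_add_37 {x m : ℕ} (h : x ^ 2 = 28 * 3 ^ (m + 4) + 2997) :
    ∃ y, y ^ 2 = 28 * 3 ^ m + 37 := by
  obtain ⟨y, rfl⟩ : 9 ∣ x :=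
    (Nat.pow_dvd_pow_iff two_ne_zero).1 ⟨28 * 3 ^ m + 37, by rw [h, pow_add]; ring⟩
  refine ⟨y, Nat.eq_of_mul_eq_mul_left (by norm_num : 0 < 81) ?_⟩
  rw [pow_add] at h
  linarith

theorem stmt_6 :
    (∀ x n : ℕ, x^2 = 28 * 3^n + 2997 →
      n = 0 ∨ n = 2 ∨ n = 5 ∨ n = 6 ∨ n = 10) ∧
    (∀ n : ℕ, (n = 0 ∨ n = 2 ∨ n = 5 ∨ n = 6 ∨ n = 10) →
      ∃ x : ℕ, x^2 = 28 * 3^n + 2997) := by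
  refine ⟨fun x n h => ?_, ?_⟩
  · by_cases hn : n < 12
    · have small : ∀ n < 12, IsSquare (28 * 3 ^ n + 2997) →
          n = 0 ∨ n = 2 ∨ n = 5 ∨ n = 6 ∨ n = 10 := by decide +kernel
      exact small n hn ⟨x, by rw [← h, sq]⟩
    obtain ⟨m, rfl⟩ : ∃ m, n = m + 4 := ⟨n - 4, by omega⟩
    obtain ⟨y, hy⟩ := exists_sq_eq_28_mul_three_pow_add_37 h
    obtain ⟨t, rfl | rfl⟩ := Nat.even_or_odd' m
    · exact (sq_ne_28_mul_three_pow_sq_add_37 (t := t) (by omega) y (by rw [hy, pow_mul'])).elim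
    · exact (sq_ne_84_mul_three_pow_sq_add_37 (t := t) (by omega) y
        (by rw [hy, pow_succ, pow_mul']; ring)).elim
  · rintro n (rfl | rfl | rfl | rfl | rfl)
    exacts [⟨55, by norm_num⟩, ⟨57, by norm_num⟩, ⟨99, by norm_num⟩, ⟨153, by norm_num⟩,
      ⟨1287, by norm_num⟩]
end

section
/- For every positive integer t and nonnegative integer m, the Diophantine equation x^2 = (2t)^n + t^2·((2t)^{2(m+2)} - 2(2t+1)(2t)^{m+2} + (2t-1)^2) has at least three solutions in positive integers, namely (x,n) = (t((2t)^{m+2} - 2t - 1), 3), (t((2t)^{m+2} - 2t + 1), m+4), and (t((2t)^{m+2} + 2t - 1), m+5). -/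
/-!
Put `K = (2t)^(m+2)`, so that `B = t^2 (K^2 - 2(2t+1)K + (2t-1)^2)`. Completing the square in `K`
in three ways,
`B = (t(K - 2t - 1))^2 - (2t)^3 = (t(K - 2t + 1))^2 - (2t)^2 K = (t(K + 2t - 1))^2 - (2t)^3 K`,
and `(2t)^2 K`, `(2t)^3 K` are the powers `(2t)^(m+4)`, `(2t)^(m+5)`.
-/

section
variable {R : Type*} [CommRing R] (t K : R)

theorem sq_mul_sub_sub_one_eq :
    (t * (K - 2*t - 1))^2 = (2*t)^3 + t^2 * (K^2 - 2*(2*t+1)*K + (2*t-1)^2) := by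
  ring

theorem sq_mul_sub_add_one_eq :
    (t * (K - 2*t + 1))^2 = (2*t)^2 * K + t^2 * (K^2 - 2*(2*t+1)*K + (2*t-1)^2) := by
  ring

theorem sq_mul_add_sub_one_eq :
    (t * (K + 2*t - 1))^2 = (2*t)^3 * K + t^2 * (K^2 - 2*(2*t+1)*K + (2*t-1)^2) := by
  ring

end

theorem stmt_12_general (t : ℤ) (m : ℕ) :
    ((t * ((2*t)^(m+2) - 2*t - 1))^2
      = (2*t)^3 + t^2 * ((2*t)^(2*(m+2)) - 2*(2*t+1)*(2*t)^(m+2) + (2*t-1)^2)) ∧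
    ((t * ((2*t)^(m+2) - 2*t + 1))^2
      = (2*t)^(m+4) + t^2 * ((2*t)^(2*(m+2)) - 2*(2*t+1)*(2*t)^(m+2) + (2*t-1)^2)) ∧
    ((t * ((2*t)^(m+2) + 2*t - 1))^2
      = (2*t)^(m+5) + t^2 * ((2*t)^(2*(m+2)) - 2*(2*t+1)*(2*t)^(m+2) + (2*t-1)^2)) := by
  have hsq : (2*t)^(2*(m+2)) = ((2*t)^(m+2))^2 := by ring
  have h4 : (2*t)^(m+4) = (2*t)^2 * (2*t)^(m+2) := by ring
  have h5 : (2*t)^(m+5) = (2*t)^3 * (2*t)^(m+2) := by ring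
  rw [hsq, h4, h5]
  exact ⟨sq_mul_sub_sub_one_eq _ _, sq_mul_sub_add_one_eq _ _, sq_mul_add_sub_one_eq _ _⟩

theorem stmt_12 (t : ℤ) (ht : 0 < t) (m : ℕ) :
    ((t * ((2*t)^(m+2) - 2*t - 1))^2
      = (2*t)^3 + t^2 * ((2*t)^(2*(m+2)) - 2*(2*t+1)*(2*t)^(m+2) + (2*t-1)^2)) ∧
    ((t * ((2*t)^(m+2) - 2*t + 1))^2
      = (2*t)^(m+4) + t^2 * ((2*t)^(2*(m+2)) - 2*(2*t+1)*(2*t)^(m+2) + (2*t-1)^2)) ∧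
    ((t * ((2*t)^(m+2) + 2*t - 1))^2
      = (2*t)^(m+5) + t^2 * ((2*t)^(2*(m+2)) - 2*(2*t+1)*(2*t)^(m+2) + (2*t-1)^2)) :=
  stmt_12_general t m
end

section
/- The Diophantine equation x^2 = 6^n + 2185 has exactly three solutions in positive integers (x,n), namely n = 3, 4, 6 with x = 49, 59, 221 respectively. -/
/-!
For even `n = 2m` we have `x > 6^m`, so `(6^m + 1)^2 ≤ x^2` gives `6^m ≤ 1092` and `m ≤ 3`.
For odd `n = 2m + 1` the pair `(x, 6^m)` solves `x^2 - 6y^2 = 2185`. Dividing by the unit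
`5 + 2√6` of `ℤ[√6]` reduces every nonnegative solution to one of the eight with
`y^2 < 4 · 2185`, so every solution lies in the orbit of one of these under multiplication by
`5 + 2√6`. Modulo 180 these orbits have period 12 and never reach `y ≡ 1` or `y ≡ 36`, whereas
`6^m ≡ 36 (mod 180)` for `m ≥ 2`; hence `m = 1`. This leaves `n ≤ 6`, a finite check.
-/

section PellStep

variable {R : Type*} [CommRing R]

/-- `x + y√6 ↦ (x + y√6)(5 + 2√6)`, in the coordinates `(x, y)`. -/
def pellStep (p : R × R) : R × R := (5 * p.1 + 12 * p.2, 2 * p.1 + 5 * p.2)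

theorem pellStep_norm (p : R × R) :
    (pellStep p).1 ^ 2 - 6 * (pellStep p).2 ^ 2 = p.1 ^ 2 - 6 * p.2 ^ 2 := by
  simp only [pellStep]
  ring

theorem semiconj_prodMap_pellStep {S : Type*} [CommRing S] (f : R →+* S) :
    Function.Semiconj (Prod.map f f) pellStep pellStep := by
  intro p
  simp [pellStep, map_ofNat f]

end PellStep

theorem exists_pellStep_eq_of_four_mul_le_sq {N x y : ℤ} (hN : 0 < N) (hx : 0 ≤ x) (hy : 0 ≤ y)
    (h : x ^ 2 - 6 * y ^ 2 = N) (hNy : 4 * N ≤ y ^ 2) :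
    ∃ x' y', 0 ≤ x' ∧ 0 ≤ y' ∧ y' < y ∧ pellStep (x', y') = (x, y) := by
  refine ⟨5 * x - 12 * y, 5 * y - 2 * x, by nlinarith, by nlinarith, by nlinarith, ?_⟩
  simp only [pellStep, Prod.mk.injEq]
  constructor <;> ring

theorem exists_iterate_pellStep_eq {N x y : ℤ} (hN : 0 < N) (hx : 0 ≤ x) (hy : 0 ≤ y)
    (h : x ^ 2 - 6 * y ^ 2 = N) :
    ∃ k x₀ y₀, 0 ≤ x₀ ∧ 0 ≤ y₀ ∧ y₀ ^ 2 < 4 * N ∧ x₀ ^ 2 - 6 * y₀ ^ 2 = N ∧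
      pellStep^[k] (x₀, y₀) = (x, y) := by
  by_cases hsmall : y ^ 2 < 4 * N
  · exact ⟨0, x, y, hx, hy, hsmall, h, rfl⟩
  obtain ⟨x', y', hx', hy', hlt, hstep⟩ :=
    exists_pellStep_eq_of_four_mul_le_sq hN hx hy h (not_lt.1 hsmall)
  have h' : x' ^ 2 - 6 * y' ^ 2 = N := by
    have hnorm := pellStep_norm (x', y')
    rw [hstep] at hnorm
    exact hnorm ▸ h
  obtain ⟨k, x₀, y₀, hx₀, hy₀, hsmall₀, h₀, hk⟩ := exists_iterate_pellStep_eq hN hx' hy' h'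
  exact ⟨k + 1, x₀, y₀, hx₀, hy₀, hsmall₀, h₀, by rw [Function.iterate_succ_apply', hk, hstep]⟩
termination_by y.toNat
decreasing_by omega

def fundamentalSolutions : List (ℤ × ℤ) :=
  [(47, 2), (49, 6), (61, 16), (79, 26), (83, 28), (113, 42), (173, 68), (211, 84)]

theorem mem_fundamentalSolutions {x y : ℤ} (hx : 0 ≤ x) (hy : 0 ≤ y)
    (hsmall : y ^ 2 < 4 * 2185) (h : x ^ 2 - 6 * y ^ 2 = 2185) :
    (x, y) ∈ fundamentalSolutions := by
  have search : ∀ y ∈ Finset.Ico (0 : ℤ) 94, ∀ x ∈ Finset.Ico (0 : ℤ) 234,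
      x ^ 2 - 6 * y ^ 2 = 2185 → (x, y) ∈ fundamentalSolutions := by
    decide +kernel
  exact search y (Finset.mem_Ico.2 ⟨hy, by nlinarith⟩) x (Finset.mem_Ico.2 ⟨hx, by nlinarith⟩) h

theorem fundamentalSolutions_orbit_mod_180 : ∀ p ∈ fundamentalSolutions,
    let q := Prod.map (Int.cast : ℤ → ZMod 180) Int.cast p
    Function.IsPeriodicPt pellStep 12 q ∧
      ∀ j < 12, (pellStep^[j] q).2 ≠ 1 ∧ (pellStep^[j] q).2 ≠ 36 := by
  decide

theorem intCast_zmod_180_ne_of_sq_sub_six_mul_sq_eq {x y : ℤ} (hx : 0 ≤ x) (hy : 0 ≤ y)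
    (h : x ^ 2 - 6 * y ^ 2 = 2185) : (y : ZMod 180) ≠ 1 ∧ (y : ZMod 180) ≠ 36 := by
  obtain ⟨k, x₀, y₀, hx₀, hy₀, hsmall, h₀, hk⟩ := exists_iterate_pellStep_eq (by norm_num) hx hy h
  obtain ⟨hper, hne⟩ :=
    fundamentalSolutions_orbit_mod_180 _ (mem_fundamentalSolutions hx₀ hy₀ hsmall h₀)
  have hcast := (semiconj_prodMap_pellStep (Int.castRingHom (ZMod 180))).iterate_right k (x₀, y₀)
  rw [Int.coe_castRingHom, hk, ← hper.iterate_mod_apply] at hcast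
  rw [show (y : ZMod 180) = _ from congrArg Prod.snd hcast]
  exact hne _ (Nat.mod_lt _ (by norm_num))

theorem six_pow_zmod_180_of_two_le {m : ℕ} (hm : 2 ≤ m) : (6 : ZMod 180) ^ m = 36 := by
  induction m, hm using Nat.le_induction with
  | base => decide
  | succ m _ ih => rw [pow_succ, ih]; decide

theorem eq_one_of_sq_eq_six_mul_six_pow_sq_add {x m : ℕ} (h : x ^ 2 = 6 * (6 ^ m) ^ 2 + 2185) :
    m = 1 := by
  have hz : (x : ℤ) ^ 2 - 6 * ((6 ^ m : ℕ) : ℤ) ^ 2 = 2185 := by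
    push_cast
    linear_combination (by exact_mod_cast h : (x : ℤ) ^ 2 = 6 * (6 ^ m) ^ 2 + 2185)
  obtain ⟨hne1, hne36⟩ :=
    intCast_zmod_180_ne_of_sq_sub_six_mul_sq_eq (Int.natCast_nonneg x) (Int.natCast_nonneg _) hz
  push_cast at hne1 hne36
  rcases Nat.lt_or_ge m 2 with hm | hm
  · interval_cases m
    · simp at hne1
    · rfl
  · exact absurd (six_pow_zmod_180_of_two_le hm) hne36

theorem lt_four_of_sq_eq_six_pow_sq_add {x m : ℕ} (h : x ^ 2 = (6 ^ m) ^ 2 + 2185) : m < 4 := by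
  have hlt : 6 ^ m < x := lt_of_pow_lt_pow_left₀ 2 (Nat.zero_le x) (by omega)
  have : 6 ^ m < 6 ^ 4 := by nlinarith
  exact (Nat.pow_lt_pow_iff_right (by norm_num)).1 this

theorem le_six_of_sq_eq_six_pow_add {x n : ℕ} (h : x ^ 2 = 6 ^ n + 2185) : n ≤ 6 := by
  obtain ⟨m, rfl | rfl⟩ := Nat.even_or_odd' n
  · have := lt_four_of_sq_eq_six_pow_sq_add (m := m) (h.trans (by rw [pow_mul']))
    omega
  · have := eq_one_of_sq_eq_six_mul_six_pow_sq_add (m := m) (h.trans (by rw [pow_succ', pow_mul']))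
    omega

theorem stmt_13_general (x n : ℕ) :
    x^2 = 6^n + 2185 ↔
      (x, n) = (49, 3) ∨ (x, n) = (59, 4) ∨ (x, n) = (221, 6) := by
  constructor
  · intro h
    have hn := le_six_of_sq_eq_six_pow_add h
    interval_cases n <;> norm_num at h ⊢
    · exact Nat.not_exists_sq' (m := 46) (by norm_num) (by norm_num) ⟨x, h⟩
    · exact Nat.not_exists_sq' (m := 46) (by norm_num) (by norm_num) ⟨x, h⟩
    · exact Nat.not_exists_sq' (m := 47) (by norm_num) (by norm_num) ⟨x, h⟩
    · exact Nat.pow_left_injective two_ne_zero (h.trans (by norm_num : 2401 = 49 ^ 2))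
    · exact Nat.pow_left_injective two_ne_zero (h.trans (by norm_num : 3481 = 59 ^ 2))
    · exact Nat.not_exists_sq' (m := 99) (by norm_num) (by norm_num) ⟨x, h⟩
    · exact Nat.pow_left_injective two_ne_zero (h.trans (by norm_num : 48841 = 221 ^ 2))
  · rintro (h | h | h) <;> simp only [Prod.mk.injEq] at h <;> rw [h.1, h.2] <;> norm_num

theorem stmt_13 (x n : ℕ) (hx : 0 < x) (hn : 0 < n) :
    x^2 = 6^n + 2185 ↔
      (x, n) = (49, 3) ∨ (x, n) = (59, 4) ∨ (x, n) = (221, 6) :=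
  stmt_13_general x n
end

section
/- Fix an integer t and set k = t^2 + 1. For every positive integer m, define B = (k^2/(4(k-1)))·(k^{2m+2} + 2(k-2)k^m + 1); equivalently 4t^2·B = k^2(k^{2m+2} + 2(k-2)k^m + 1). Then the three pairs (x,n) = ((k^{m+2}+k-2)/(2t), 0), (k(k^{m+1}-1)/(2t), m+2), and (k(k^m(k-2)+1)/(2t), 2m+2) satisfy the equation x^2 + k^n = B, in the sense that (2t·x)^2 + 4t^2·k^n = 4t^2·B holds as an identity for the corresponding values 2t·x = k^{m+2}+k-2, k(k^{m+1}-1), k(k^m(k-2)+1). -/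
theorem stmt_17_general (t : ℤ) (k : ℤ) (hk : k = t^2 + 1) (m : ℕ) :
    ((k^(m+2) + k - 2)^2 + 4*t^2 * k^0
      = k^2 * (k^(2*m+2) + 2*(k-2)*k^m + 1)) ∧
    ((k * (k^(m+1) - 1))^2 + 4*t^2 * k^(m+2)
      = k^2 * (k^(2*m+2) + 2*(k-2)*k^m + 1)) ∧
    ((k * (k^m * (k-2) + 1))^2 + 4*t^2 * k^(2*m+2)
      = k^2 * (k^(2*m+2) + 2*(k-2)*k^m + 1)) := by
  subst hk
  exact ⟨by ring, by ring, by ring⟩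

theorem stmt_17 (t : ℤ) (k : ℤ) (hk : k = t^2 + 1) (m : ℕ) (hm : 0 < m) :
    ((k^(m+2) + k - 2)^2 + 4*t^2 * k^0
      = k^2 * (k^(2*m+2) + 2*(k-2)*k^m + 1)) ∧
    ((k * (k^(m+1) - 1))^2 + 4*t^2 * k^(m+2)
      = k^2 * (k^(2*m+2) + 2*(k-2)*k^m + 1)) ∧
    ((k * (k^m * (k-2) + 1))^2 + 4*t^2 * k^(2*m+2)
      = k^2 * (k^(2*m+2) + 2*(k-2)*k^m + 1)) :=
  stmt_17_general t k hk m
end
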